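/- arXiv:1807.09832 — 5 statements merged into one kernel-verified Lean document; each statement's English description precedes it below -/
import Mathlib

section
/- If two weight sequences M and L are equivalent (M ≈ L), then their growth indices coincide: ω(M) = ω(L), where ω(M) := liminf_{p→∞} log(m_p)/log(p). -/
/-! Since the quotients `m_p` increase, `ω(M)` equals `liminf log M_p / (p log p)`: writing
`log M_p = ∑_{j<p} log m_j`, one has `log M_{p+1} ≤ (p+1) log m_p`, and conversely
`log m_j ≥ c log j` for large `j` sums to `log M_p ≥ c log (p-1)! - O(1) = c p log p - O(p)`.
Equivalence of `M` and `L` changes `log M_p` only by `O(p)`, which disappears after dividing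
by `p log p`. -/

open Filter Finset Real Topology
open scoped Nat

namespace EReal

variable {α : Type*} {l : Filter α} [l.NeBot] {u v : α → ℝ}

theorem liminf_coe_le_liminf_coe_of_tendsto_sub (h : Tendsto (fun x => u x - v x) l (𝓝 0)) :
    liminf (fun x => (v x : EReal)) l ≤ liminf (fun x => (u x : EReal)) l :=
  calc liminf (fun x => (v x : EReal)) l
      = liminf (fun x => (v x : EReal)) l + liminf (fun x => ((u x - v x : ℝ) : EReal)) l := by
        rw [(tendsto_coe.2 h).liminf_eq, coe_zero, add_zero]
    _ ≤ liminf ((fun x => (v x : EReal)) + fun x => ((u x - v x : ℝ) : EReal)) l :=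
        le_liminf_add
    _ = liminf (fun x => (u x : EReal)) l := by
        congr 1
        funext x
        rw [Pi.add_apply, ← coe_add, add_sub_cancel]

theorem liminf_coe_eq_of_tendsto_sub (h : Tendsto (fun x => u x - v x) l (𝓝 0)) :
    liminf (fun x => (u x : EReal)) l = liminf (fun x => (v x : EReal)) l :=
  le_antisymm (liminf_coe_le_liminf_coe_of_tendsto_sub (by simpa using h.neg))
    (liminf_coe_le_liminf_coe_of_tendsto_sub h)

end EReal

theorem Real.tendsto_log_natCast_atTop : Tendsto (fun p : ℕ => log p) atTop atTop :=
  tendsto_log_atTop.comp tendsto_natCast_atTop_atTop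

theorem Real.tendsto_natCast_mul_log_atTop :
    Tendsto (fun p : ℕ => (p : ℝ) * log p) atTop atTop :=
  tendsto_natCast_atTop_atTop.atTop_mul_atTop₀ tendsto_log_natCast_atTop

theorem Real.sum_range_log_natCast (p : ℕ) : ∑ j ∈ range p, log j = log p ! - log p := by
  induction p with
  | zero => simp
  | succ p ih =>
    rw [sum_range_succ, ih, Nat.factorial_succ, Nat.cast_mul,
      log_mul (by positivity) (by positivity)]
    ring

theorem Real.tendsto_log_factorial_div_natCast_mul_log :
    Tendsto (fun p : ℕ => log p ! / (p * log p)) atTop (𝓝 1) := by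
  have hlow : Tendsto (fun p : ℕ => 1 - 1 / log p) atTop (𝓝 (1 - 0)) :=
    tendsto_const_nhds.sub (tendsto_const_nhds.div_atTop tendsto_log_natCast_atTop)
  rw [sub_zero] at hlow
  have hbounds : ∀ p : ℕ, 2 ≤ p →
      1 - 1 / log p ≤ log p ! / (p * log p) ∧ log p ! / (p * log p) ≤ 1 := by
    intro p hp
    have hp' : (2 : ℝ) ≤ p := by exact_mod_cast hp
    have hlog : 0 < log p := log_pos (by linarith)
    have hden : 0 < (p : ℝ) * log p := mul_pos (by linarith) hlog
    constructor
    · have hstirling := Stirling.le_log_factorial_stirling (n := p) (by positivity)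
      have h2pi : 0 < log (2 * π) := log_pos (by linarith [pi_gt_three])
      rw [le_div_iff₀ hden, sub_mul, one_div, mul_comm (p : ℝ), ← mul_assoc,
        inv_mul_cancel_left₀ hlog.ne']
      linarith
    · rw [div_le_one hden, ← log_pow]
      exact log_le_log (by positivity) (by exact_mod_cast Nat.factorial_le_pow p)
  exact tendsto_of_tendsto_of_tendsto_of_le_of_le' hlow tendsto_const_nhds
    ((eventually_ge_atTop 2).mono fun p hp => (hbounds p hp).1)
    ((eventually_ge_atTop 2).mono fun p hp => (hbounds p hp).2)

theorem Real.tendsto_sum_range_log_div_natCast_mul_log :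
    Tendsto (fun p : ℕ => (∑ j ∈ range p, log j) / (p * log p)) atTop (𝓝 1) := by
  have h : Tendsto (fun p : ℕ => log p ! / (p * log p) - 1 / p) atTop (𝓝 (1 - 0)) :=
    tendsto_log_factorial_div_natCast_mul_log.sub
      (tendsto_const_nhds.div_atTop tendsto_natCast_atTop_atTop)
  rw [sub_zero] at h
  refine h.congr' ?_
  filter_upwards [eventually_ge_atTop 2] with p hp
  have hp' : (2 : ℝ) ≤ p := by exact_mod_cast hp
  have hlog : 0 < log p := log_pos (by linarith)
  rw [sum_range_log_natCast, sub_div, div_mul_cancel_right₀ hlog.ne', one_div]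

section LogCesaro

variable {f : ℕ → ℝ}

theorem liminf_div_log_le_liminf_sum_div_mul_log :
    liminf (fun p : ℕ => ((f p / log p : ℝ) : EReal)) atTop ≤
      liminf (fun p : ℕ => (((∑ j ∈ range p, f j) / (p * log p) : ℝ) : EReal)) atTop := by
  refine EReal.ge_of_forall_gt_iff_ge.1 fun c hc => ?_
  obtain ⟨N, hN⟩ := eventually_atTop.1
    ((eventually_lt_of_lt_liminf hc).and (eventually_ge_atTop 2))
  have hfN : ∀ j ≥ N, c * log j ≤ f j := fun j hj => by
    obtain ⟨hcj, hj2⟩ := hN j hj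
    have hlog : 0 < log j := log_pos (by exact_mod_cast hj2)
    exact (le_div_iff₀ hlog).1 (EReal.coe_lt_coe_iff.1 hcj).le
  set K := ∑ j ∈ range N, (f j - c * log j)
  have hlow : ∀ p ≥ N, K + c * ∑ j ∈ range p, log j ≤ ∑ j ∈ range p, f j := by
    intro p hp
    have hK : K ≤ ∑ j ∈ range p, (f j - c * log j) :=
      sum_le_sum_of_subset_of_nonneg (range_mono hp)
        fun j _ hjN => sub_nonneg.2 (hfN j (by simpa using hjN))
    rw [sum_sub_distrib, ← mul_sum] at hK
    linarith
  have hlim : Tendsto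
      (fun p : ℕ => K / (p * log p) + c * ((∑ j ∈ range p, log j) / (p * log p)))
      atTop (𝓝 (0 + c * 1)) :=
    (tendsto_const_nhds.div_atTop tendsto_natCast_mul_log_atTop).add
      (tendsto_sum_range_log_div_natCast_mul_log.const_mul c)
  rw [zero_add, mul_one] at hlim
  rw [← (EReal.tendsto_coe.2 hlim).liminf_eq]
  refine liminf_le_liminf ?_
  filter_upwards [eventually_ge_atTop N, eventually_ge_atTop 2] with p hp hp2
  have hp' : (2 : ℝ) ≤ p := by exact_mod_cast hp2
  have hden : 0 < (p : ℝ) * log p := mul_pos (by linarith) (log_pos (by linarith))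
  rw [EReal.coe_le_coe_iff, ← mul_div_assoc, ← add_div]
  exact div_le_div_of_nonneg_right (hlow p hp) hden.le

theorem liminf_sum_div_mul_log_le_liminf_div_log (hf : Monotone f)
    (hf0 : ∀ᶠ p in atTop, 0 ≤ f p) :
    liminf (fun p : ℕ => (((∑ j ∈ range p, f j) / (p * log p) : ℝ) : EReal)) atTop ≤
      liminf (fun p : ℕ => ((f p / log p : ℝ) : EReal)) atTop := by
  rw [← liminf_nat_add _ 1]
  refine liminf_le_liminf ?_
  filter_upwards [hf0, eventually_ge_atTop 2] with p hfp hp2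
  have hp' : (2 : ℝ) ≤ p := by exact_mod_cast hp2
  have hsum : ∑ j ∈ range (p + 1), f j ≤ (p + 1) * f p := by
    simpa using sum_le_card_nsmul (range (p + 1)) f (f p)
      fun j hj => hf (Nat.lt_succ_iff.1 (mem_range.1 hj))
  rw [EReal.coe_le_coe_iff, Nat.cast_add_one]
  calc (∑ j ∈ range (p + 1), f j) / ((p + 1) * log (p + 1))
      ≤ (p + 1) * f p / ((p + 1) * log (p + 1)) :=
        div_le_div_of_nonneg_right hsum (mul_pos (by linarith) (log_pos (by linarith))).le
    _ = f p / log (p + 1) := mul_div_mul_left _ _ (by linarith)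
    _ ≤ f p / log p :=
        div_le_div_of_nonneg_left hfp (log_pos (by linarith))
          (log_le_log (by linarith) (by linarith))

theorem liminf_div_log_eq_liminf_sum_div_mul_log (hf : Monotone f)
    (hf0 : ∀ᶠ p in atTop, 0 ≤ f p) :
    liminf (fun p : ℕ => ((f p / log p : ℝ) : EReal)) atTop =
      liminf (fun p : ℕ => (((∑ j ∈ range p, f j) / (p * log p) : ℝ) : EReal)) atTop :=
  le_antisymm liminf_div_log_le_liminf_sum_div_mul_log
    (liminf_sum_div_mul_log_le_liminf_div_log hf hf0)

end LogCesaro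

theorem Real.sum_range_log_div_eq {M : ℕ → ℝ} (hM : ∀ p, 0 < M p) (p : ℕ) :
    ∑ j ∈ range p, log (M (j + 1) / M j) = log (M p) - log (M 0) := by
  rw [sum_congr rfl fun j _ => log_div (hM _).ne' (hM _).ne', sum_range_sub (fun j => log (M j))]

theorem liminf_log_quot_div_log_eq {M : ℕ → ℝ} (hMpos : ∀ p, 0 < M p) (hM0 : M 0 = 1)
    (hMmono : Monotone fun p => M (p + 1) / M p)
    (hMquot : ∀ᶠ p in atTop, 1 ≤ M (p + 1) / M p) :
    liminf (fun p : ℕ => ((log (M (p + 1) / M p) / log p : ℝ) : EReal)) atTop =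
      liminf (fun p : ℕ => ((log (M p) / (p * log p) : ℝ) : EReal)) atTop := by
  have hlogmono : Monotone fun p => log (M (p + 1) / M p) :=
    fun a b hab => log_le_log (div_pos (hMpos _) (hMpos _)) (hMmono hab)
  have hlognonneg : ∀ᶠ p in atTop, 0 ≤ log (M (p + 1) / M p) :=
    hMquot.mono fun p => log_nonneg
  simp_rw [liminf_div_log_eq_liminf_sum_div_mul_log hlogmono hlognonneg,
    sum_range_log_div_eq hMpos, hM0, log_one, sub_zero]

theorem liminf_div_natCast_mul_log_eq_of_abs_sub_le {a b : ℕ → ℝ} {C : ℝ}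
    (h : ∀ p, |a p - b p| ≤ C * p) :
    liminf (fun p : ℕ => ((a p / (p * log p) : ℝ) : EReal)) atTop =
      liminf (fun p : ℕ => ((b p / (p * log p) : ℝ) : EReal)) atTop := by
  refine EReal.liminf_coe_eq_of_tendsto_sub <| squeeze_zero_norm' ?_
    (tendsto_const_nhds.div_atTop tendsto_log_natCast_atTop :
      Tendsto (fun p : ℕ => C / log p) atTop (𝓝 0))
  filter_upwards [eventually_ge_atTop 2] with p hp2
  have hp' : (2 : ℝ) ≤ p := by exact_mod_cast hp2
  have hlog : 0 < log p := log_pos (by linarith)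
  rw [norm_eq_abs, ← sub_div, abs_div, abs_of_pos (mul_pos (by linarith) hlog),
    div_le_iff₀ (mul_pos (by linarith) hlog), mul_comm (p : ℝ), ← mul_assoc,
    div_mul_cancel₀ _ hlog.ne']
  exact h p

theorem abs_log_sub_log_le_of_equiv {M L : ℕ → ℝ} {A B : ℝ} (hMpos : ∀ p, 0 < M p)
    (hLpos : ∀ p, 0 < L p) (hA : 0 < A) (hB : 0 < B)
    (hequiv : ∀ p : ℕ, (B ^ p)⁻¹ * L p ≤ M p ∧ M p ≤ A ^ p * L p) (p : ℕ) :
    |log (M p) - log (L p)| ≤ max (log A) (log B) * p := by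
  have hupper : log (M p) ≤ p * log A + log (L p) := by
    rw [← log_pow, ← log_mul (by positivity) (hLpos p).ne']
    exact log_le_log (hMpos p) (hequiv p).2
  have hlower : log (L p) - p * log B ≤ log (M p) := by
    rw [← log_pow, sub_eq_neg_add, ← log_inv, ← log_mul (by positivity) (hLpos p).ne']
    exact log_le_log (mul_pos (inv_pos.2 (pow_pos hB p)) (hLpos p)) (hequiv p).1
  have hA' := mul_le_mul_of_nonneg_right (le_max_left (log A) (log B)) p.cast_nonneg
  have hB' := mul_le_mul_of_nonneg_right (le_max_right (log A) (log B)) p.cast_nonneg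
  rw [abs_le]
  constructor <;> linarith

/-- If two weight sequences `M` and `L` are equivalent, then their growth indices coincide:
`ω(M) = ω(L)`, where `ω(M) = liminf_p log (m p) / log p` (computed in `EReal`). -/
theorem stmt9 (M L : ℕ → ℝ)
    (hMpos : ∀ p, 0 < M p) (hM0 : M 0 = 1)
    (hMmono : Monotone fun p => M (p + 1) / M p)
    (hMquot : Tendsto (fun p => M (p + 1) / M p) atTop atTop)
    (hLpos : ∀ p, 0 < L p) (hL0 : L 0 = 1)
    (hLmono : Monotone fun p => L (p + 1) / L p)
    (hLquot : Tendsto (fun p => L (p + 1) / L p) atTop atTop)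
    (A B : ℝ) (hA : 0 < A) (hB : 0 < B)
    (hequiv : ∀ p : ℕ, (B ^ p)⁻¹ * L p ≤ M p ∧ M p ≤ A ^ p * L p) :
    liminf (fun p : ℕ =>
        ((Real.log (M (p + 1) / M p) / Real.log p : ℝ) : EReal)) atTop =
      liminf (fun p : ℕ =>
        ((Real.log (L (p + 1) / L p) / Real.log p : ℝ) : EReal)) atTop := by
  rw [liminf_log_quot_div_log_eq hMpos hM0 hMmono (hMquot.eventually_ge_atTop 1),
    liminf_log_quot_div_log_eq hLpos hL0 hLmono (hLquot.eventually_ge_atTop 1)]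
  exact liminf_div_natCast_mul_log_eq_of_abs_sub_le
    (abs_log_sub_log_le_of_equiv hMpos hLpos hA hB hequiv)
end

section
/- A weight sequence M of moderate growth satisfies: there exist H ≥ 1 and t₀ > 0 such that 2 ω_M(t) ≤ ω_M(H t) for all t ≥ t₀. -/
open Filter

private lemma stmt10_bdd (M : ℕ → ℝ) (hpos : ∀ p, 0 < M p)
    (hquot : Filter.Tendsto (fun p => M (p + 1) / M p) Filter.atTop Filter.atTop)
    (t : ℝ) (ht : 0 < t) :
    BddAbove (Set.range fun p : ℕ => Real.log (t ^ p / M p)) := by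
  obtain ⟨N, hN⟩ := (Filter.tendsto_atTop.mp hquot t).exists_forall_of_atTop
  have key : ∀ p, N ≤ p → t ^ p / M p ≤ t ^ N / M N := by
    intro p hp
    induction p, hp using Nat.le_induction with
    | base => exact le_rfl
    | succ n hn ih =>
      refine le_trans ?_ ih
      have h1 : t * M n ≤ M (n + 1) := by
        have := hN n hn
        rw [le_div_iff₀ (hpos n)] at this
        linarith [this]
      have h2 : (0:ℝ) < t * M n := mul_pos ht (hpos n)
      calc t ^ (n+1) / M (n+1) ≤ t ^ (n+1) / (t * M n) :=
            div_le_div_of_nonneg_left (by positivity) h2 h1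
        _ = t ^ n / M n := by rw [pow_succ]; field_simp [(hpos n).ne']
  refine ⟨(Finset.range (N+1)).sup' ⟨0, Finset.mem_range.2 (Nat.succ_pos _)⟩
      (fun p => Real.log (t ^ p / M p)), ?_⟩
  rintro x ⟨p, rfl⟩
  have hMp := hpos p
  have hMN := hpos N
  rcases le_or_gt p N with hp | hp
  · exact Finset.le_sup' (fun q => Real.log (t ^ q / M q))
      (Finset.mem_range.2 (Nat.lt_succ_of_le hp))
  · have h1 : Real.log (t ^ p / M p) ≤ Real.log (t ^ N / M N) :=
      Real.log_le_log (by positivity) (key p hp.le)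
    exact h1.trans (Finset.le_sup' (fun q => Real.log (t ^ q / M q))
      (Finset.mem_range.2 (Nat.lt_succ_of_le le_rfl)))

/-- A weight sequence `M` of moderate growth satisfies: there exist `H ≥ 1` and `t₀ > 0`
such that `2 ω_M t ≤ ω_M (H t)` for all `t ≥ t₀`. -/
theorem stmt10 (M : ℕ → ℝ) (hpos : ∀ p, 0 < M p) (hM0 : M 0 = 1)
    (hmono : Monotone fun p => M (p + 1) / M p)
    (hquot : Filter.Tendsto (fun p => M (p + 1) / M p) Filter.atTop Filter.atTop)
    (hmg : ∃ A : ℝ, 0 < A ∧ ∀ p q : ℕ, M (p + q) ≤ A ^ (p + q) * M p * M q)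
    (w : ℝ → ℝ) (hw0 : w 0 = 0)
    (hdef : ∀ t : ℝ, 0 < t → w t = ⨆ p : ℕ, Real.log (t ^ p / M p)) :
    ∃ H : ℝ, 1 ≤ H ∧ ∃ t₀ : ℝ, 0 < t₀ ∧ ∀ t : ℝ, t₀ ≤ t → 2 * w t ≤ w (H * t) := by
  obtain ⟨A, hA, hAle⟩ := hmg
  refine ⟨max A 1, le_max_right _ _, 1, one_pos, fun t ht => ?_⟩
  set H := max A 1 with hH
  have ht0 : (0:ℝ) < t := lt_of_lt_of_le one_pos ht
  have hH1 : (1:ℝ) ≤ H := le_max_right _ _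
  have hHt : (0:ℝ) < H * t := by positivity
  rw [hdef t ht0, hdef (H * t) hHt]
  have hb := stmt10_bdd M hpos hquot (H * t) hHt
  have h1 : (⨆ p : ℕ, Real.log (t ^ p / M p)) ≤
      (⨆ p : ℕ, Real.log ((H * t) ^ p / M p)) / 2 := by
    apply ciSup_le
    intro p
    have hkey : 2 * Real.log (t ^ p / M p) ≤ Real.log ((H * t) ^ (2 * p) / M (2 * p)) := by
      have hMp := hpos p
      have hM2p := hpos (2*p)
      have e1 : 2 * Real.log (t ^ p / M p) = Real.log ((t ^ p / M p) ^ 2) := by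
        rw [Real.log_pow]; push_cast; ring
      rw [e1]
      apply Real.log_le_log (by positivity)
      have hM2 : M (2 * p) ≤ A ^ (2 * p) * M p * M p := by
        have := hAle p p
        rwa [← two_mul] at this
      have hAH : A ^ (2*p) ≤ H ^ (2*p) := pow_le_pow_left₀ hA.le (le_max_left _ _) _
      have e2 : (H * t) ^ (2*p) = H ^ (2*p) * t ^ (2*p) := mul_pow _ _ _
      have e3 : (t ^ p / M p) ^ 2 = t ^ (2*p) / (M p)^2 := by
        rw [div_pow, ← pow_mul, mul_comm p 2]
      rw [e3, e2, div_le_div_iff₀ (by positivity) hM2p]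
      have ht2 : (0:ℝ) < t ^ (2*p) := by positivity
      calc t ^ (2*p) * M (2*p)
          ≤ t ^ (2*p) * (A ^ (2*p) * M p * M p) :=
            mul_le_mul_of_nonneg_left hM2 ht2.le
        _ = A ^ (2*p) * t ^ (2*p) * (M p)^2 := by ring
        _ ≤ H ^ (2*p) * t ^ (2*p) * (M p)^2 :=
            mul_le_mul_of_nonneg_right
              (mul_le_mul_of_nonneg_right hAH ht2.le) (by positivity)
    have hle : Real.log ((H * t) ^ (2 * p) / M (2 * p)) ≤
        ⨆ q : ℕ, Real.log ((H * t) ^ q / M q) := le_ciSup hb (2 * p)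
    linarith
  linarith
end

section
/- If the sequence of quotients of a weight sequence M admits a representation m_p = exp(b_{p+1} + Σ_{j=1}^{p+1} η_j/j) with (b_p) a bounded real sequence and (η_p) a bounded real sequence converging to ω ∈ (0,∞), then lim_{p→∞} log(m_p)/log(p) = ω. -/
open Filter

private lemma aux_sum_Icc_eq_range (f : ℕ → ℝ) (n : ℕ) :
    ∑ j ∈ Finset.Icc 1 n, f j = ∑ i ∈ Finset.range n, f (1 + i) := by
  rw [← Finset.Ico_add_one_right_eq_Icc, Finset.sum_Ico_eq_sum_range]
  simp

/-- If the quotients of a weight sequence `M` admit a representation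
`m p = exp (b (p+1) + ∑_{j=1}^{p+1} η j / j)` with `b` bounded and `η` bounded converging to
`ω > 0`, then `log (m p) / log p → ω`. -/
theorem stmt14 (M : ℕ → ℝ) (hpos : ∀ p, 0 < M p) (hM0 : M 0 = 1)
    (hmono : Monotone fun p => M (p + 1) / M p)
    (hquot : Tendsto (fun p => M (p + 1) / M p) atTop atTop)
    (b η : ℕ → ℝ) (ω : ℝ) (hω : 0 < ω)
    (hb : ∃ C : ℝ, ∀ p : ℕ, 1 ≤ p → |b p| ≤ C)
    (hη : ∃ C : ℝ, ∀ p : ℕ, 1 ≤ p → |η p| ≤ C)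
    (hηlim : Tendsto η atTop (nhds ω))
    (hrep : ∀ p : ℕ,
      M (p + 1) / M p =
        Real.exp (b (p + 1) + ∑ j ∈ Finset.Icc 1 (p + 1), η j / (j : ℝ))) :
    Tendsto (fun p : ℕ => Real.log (M (p + 1) / M p) / Real.log p) atTop (nhds ω) := by
  have hlog : Tendsto (fun n : ℕ => Real.log n) atTop atTop :=
    Real.tendsto_log_atTop.comp tendsto_natCast_atTop_atTop
  have hloginv : Tendsto (fun n : ℕ => (Real.log n)⁻¹) atTop (nhds 0) :=
    hlog.inv_tendsto_atTop
  -- harmonic sums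
  set H : ℕ → ℝ := fun n => ∑ i ∈ Finset.range n, (1 / (i + 1) : ℝ) with hHdef
  have hHharm : ∀ n : ℕ, H n = (harmonic n : ℝ) := by
    intro n
    rw [harmonic_eq_sum_Icc]
    push_cast
    rw [aux_sum_Icc_eq_range (fun j => ((j : ℝ))⁻¹) n]
    apply Finset.sum_congr rfl
    intro i _
    push_cast
    rw [one_div, add_comm]
  have hHlb : ∀ n : ℕ, Real.log n ≤ H n := by
    intro n
    rw [hHharm]
    rcases Nat.eq_zero_or_pos n with h0 | h1
    · simp [h0]
    · refine le_trans ?_ (log_add_one_le_harmonic n)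
      have hn0 : (0 : ℝ) < n := by exact_mod_cast h1
      exact Real.log_le_log hn0 (by push_cast; linarith)
  have hHub : ∀ n : ℕ, H n ≤ 1 + Real.log n := by
    intro n; rw [hHharm]; exact harmonic_le_one_add_log n
  have hHpos : ∀ n : ℕ, 1 ≤ n → 0 < H n := by
    intro n hn
    rw [hHharm]
    exact_mod_cast harmonic_pos (Nat.one_le_iff_ne_zero.mp hn)
  -- H n / log n → 1
  have hHlog : Tendsto (fun n : ℕ => H n / Real.log n) atTop (nhds 1) := by
    have hub : Tendsto (fun n : ℕ => 1 + (Real.log n)⁻¹) atTop (nhds 1) := by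
      simpa using tendsto_const_nhds.add hloginv
    refine tendsto_of_tendsto_of_tendsto_of_le_of_le' tendsto_const_nhds hub ?_ ?_
    · filter_upwards [eventually_ge_atTop 2] with n hn
      have hlp : 0 < Real.log n := Real.log_pos (by exact_mod_cast hn)
      rw [le_div_iff₀ hlp, one_mul]
      exact hHlb n
    · filter_upwards [eventually_ge_atTop 2] with n hn
      have hlp : 0 < Real.log n := Real.log_pos (by exact_mod_cast hn)
      rw [div_le_iff₀ hlp, add_mul, one_mul, inv_mul_cancel₀ hlp.ne']
      linarith [hHub n]
  -- the little-o part
  set T : ℕ → ℝ := fun n => ∑ i ∈ Finset.range n, ((η (i + 1) - ω) * (1 / (i + 1) : ℝ))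
    with hTdef
  have hshift : Tendsto (fun i : ℕ => η (i + 1) - ω) atTop (nhds 0) := by
    have := (hηlim.comp (tendsto_add_atTop_nat 1)).sub_const ω
    simpa using this
  have hT : T =o[atTop] H := by
    have h1 := ((Asymptotics.isLittleO_one_iff ℝ).2 hshift).mul_isBigO
      (Asymptotics.isBigO_refl (fun i : ℕ => (1 / (i + 1) : ℝ)) atTop)
    simp only [one_mul] at h1
    exact h1.sum_range (fun i => by positivity) Real.tendsto_sum_range_one_div_nat_succ_atTop
  have hTH : Tendsto (fun n : ℕ => T n / H n) atTop (nhds 0) :=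
    hT.tendsto_div_nhds_zero
  have hTlog : Tendsto (fun n : ℕ => T n / Real.log n) atTop (nhds 0) := by
    have h2 : Tendsto (fun n : ℕ => T n / H n * (H n / Real.log n)) atTop (nhds (0 * 1)) :=
      hTH.mul hHlog
    rw [zero_mul] at h2
    refine h2.congr' ?_
    filter_upwards [eventually_ge_atTop 1] with n hn
    have hH0 : H n ≠ 0 := (hHpos n hn).ne'
    field_simp
  -- the partial sums
  have hS : ∀ n : ℕ, (∑ j ∈ Finset.Icc 1 n, η j / (j : ℝ)) = T n + ω * H n := by
    intro n
    rw [aux_sum_Icc_eq_range (fun j => η j / (j : ℝ)) n, hTdef, hHdef, Finset.mul_sum,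
      ← Finset.sum_add_distrib]
    apply Finset.sum_congr rfl
    intro i _
    rw [Nat.add_comm 1 i]
    push_cast
    ring
  have hSlog : Tendsto (fun n : ℕ => (∑ j ∈ Finset.Icc 1 n, η j / (j : ℝ)) / Real.log n)
      atTop (nhds ω) := by
    have h3 : Tendsto (fun n : ℕ => T n / Real.log n + ω * (H n / Real.log n)) atTop
        (nhds (0 + ω * 1)) := hTlog.add (tendsto_const_nhds.mul hHlog)
    rw [zero_add, mul_one] at h3
    refine h3.congr fun n => ?_
    rw [hS n]
    ring
  -- log (p+1) / log p → 1
  have hlograt : Tendsto (fun p : ℕ => Real.log ((p : ℝ) + 1) / Real.log p) atTop (nhds 1) := by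
    have hub : Tendsto (fun p : ℕ => 1 + Real.log 2 * (Real.log p)⁻¹) atTop (nhds 1) := by
      simpa using tendsto_const_nhds.add (tendsto_const_nhds.mul hloginv)
    refine tendsto_of_tendsto_of_tendsto_of_le_of_le' tendsto_const_nhds hub ?_ ?_
    · filter_upwards [eventually_ge_atTop 2] with p hp
      have h2 : (2 : ℝ) ≤ p := by exact_mod_cast hp
      have hlp : 0 < Real.log p := Real.log_pos (by linarith)
      rw [le_div_iff₀ hlp, one_mul]
      exact Real.log_le_log (by linarith) (by linarith)
    · filter_upwards [eventually_ge_atTop 2] with p hp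
      have h2 : (2 : ℝ) ≤ p := by exact_mod_cast hp
      have hlp : 0 < Real.log p := Real.log_pos (by linarith)
      rw [div_le_iff₀ hlp, add_mul, one_mul, mul_assoc, inv_mul_cancel₀ hlp.ne', mul_one]
      have hle : Real.log ((p : ℝ) + 1) ≤ Real.log (2 * p) :=
        Real.log_le_log (by linarith) (by linarith)
      rw [Real.log_mul two_ne_zero (by linarith)] at hle
      linarith
  -- b part
  obtain ⟨C, hC⟩ := hb
  have hbzero : Tendsto (fun p : ℕ => b (p + 1) / Real.log p) atTop (nhds 0) := by
    refine squeeze_zero_norm' ?_ (by simpa using hloginv.const_mul C)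
    filter_upwards [eventually_ge_atTop 2] with p hp
    have hlp : 0 < Real.log p := Real.log_pos (by exact_mod_cast hp)
    rw [Real.norm_eq_abs, abs_div, abs_of_pos hlp, div_le_iff₀ hlp,
      mul_assoc, inv_mul_cancel₀ hlp.ne', mul_one]
    exact hC (p + 1) (Nat.le_add_left 1 p)
  -- assemble
  have hmain : Tendsto (fun p : ℕ =>
      b (p + 1) / Real.log p +
        (∑ j ∈ Finset.Icc 1 (p + 1), η j / (j : ℝ)) / Real.log ((p : ℝ) + 1) *
          (Real.log ((p : ℝ) + 1) / Real.log p)) atTop (nhds (0 + ω * 1)) := by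
    have h4 : Tendsto (fun p : ℕ =>
        (∑ j ∈ Finset.Icc 1 (p + 1), η j / (j : ℝ)) / Real.log ((p : ℝ) + 1))
        atTop (nhds ω) := by
      have := hSlog.comp (tendsto_add_atTop_nat 1)
      refine this.congr fun p => ?_
      simp [Function.comp]
    exact hbzero.add (h4.mul hlograt)
  rw [zero_add, mul_one] at hmain
  refine hmain.congr' ?_
  filter_upwards [eventually_ge_atTop 1] with p hp
  have hlp1 : Real.log ((p : ℝ) + 1) ≠ 0 := by
    have : (1 : ℝ) < (p : ℝ) + 1 := by
      have : (1 : ℝ) ≤ p := by exact_mod_cast hp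
      linarith
    exact (Real.log_pos this).ne'
  rw [hrep p, Real.log_exp]
  field_simp
end

section
/- Let (c_p)_{p∈ℕ} be a sequence of positive reals that is regularly varying with index ω (i.e., c_{⌊λp⌋}/c_p → λ^ω for all λ > 0). Then there exists a sequence (b_p) of positive reals with b_p/c_p → 1 and b_{p+1}/b_p = 1 + ω/p + o(1/p) as p → ∞ (Bojanic–Seneta). -/
/-!
Write `s p = log c p - ω log p`, so that regular variation says `s ⌊l q⌋ - s q → 0` for every
`l > 0`. By Egorov's theorem this convergence is uniform for `l` in `[2, 10]` off a set of
measure `1/20`. For `n ∈ [p, 2p]` the sets `{l | ⌊l q⌋ = n}`, `q ∈ (p/4, p/2]`, are disjoint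
intervals of length `1/q` inside `[2, 10]`, so few of them miss the good set; hence for every
`m ∈ [p, 2p]` a single `q` reaches both `m` and `p` through good `l`, and the oscillation of `s`
on `[p, 2p]` tends to `0`. Interpolating `k ↦ s (2 ^ k)` linearly in `log₂ p` then gives `u`
with `u - s → 0` and `p (u (p + 1) - u p) → 0`, and `b p = p ^ ω exp (u p)` works.
-/

open Filter MeasureTheory Set Topology

lemma natFloor_mul_eq_of_mem_Ico {n q : ℕ} {ν : ℝ} (hq : 0 < q)
    (hν : ν ∈ Ico ((n : ℝ) / q) ((n + 1) / q)) : ⌊ν * q⌋₊ = n := by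
  have hq' : (0 : ℝ) < q := by exact_mod_cast hq
  have hν0 : 0 ≤ ν := le_trans (by positivity) hν.1
  rw [Nat.floor_eq_iff (by positivity)]
  rwa [mem_Ico, div_le_iff₀ hq', lt_div_iff₀ hq'] at hν

lemma pairwiseDisjoint_Ico_div (n : ℕ) :
    {q : ℕ | q ≤ n}.PairwiseDisjoint fun q : ℕ => Ico ((n : ℝ) / q) ((n + 1) / q) := by
  intro q hq q' hq' hne
  wlog hlt : q < q' generalizing q q'
  · exact (this hq' hq hne.symm (lt_of_le_of_ne (not_lt.1 hlt) hne.symm)).symm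
  rcases Nat.eq_zero_or_pos q with rfl | hq0
  · simp
  refine disjoint_left.2 fun ν h h' => ?_
  have hqr : (0 : ℝ) < q := by exact_mod_cast hq0
  have hq'r : (0 : ℝ) < q' := by exact_mod_cast hq0.trans hlt
  have hlow : (n : ℝ) ≤ ν * q := (div_le_iff₀ hqr).1 h.1
  have hup : ν * q' < n + 1 := (lt_div_iff₀ hq'r).1 h'.2
  have hqn : (q : ℝ) ≤ n := by exact_mod_cast (hq : q ≤ n)
  have hstep : (q : ℝ) + 1 ≤ q' := by exact_mod_cast hlt
  have hν1 : 1 ≤ ν := by nlinarith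
  nlinarith

lemma ofReal_card_div_le_volume {B : Finset ℕ} {n Q : ℕ} {T : Set ℝ}
    (hB : ∀ q ∈ B, 0 < q ∧ q ≤ n ∧ q ≤ Q)
    (hT : ∀ q ∈ B, Ico ((n : ℝ) / q) ((n + 1) / q) ⊆ T) :
    ENNReal.ofReal (B.card / Q) ≤ volume T := by
  calc ENNReal.ofReal (B.card / Q) = ∑ _q ∈ B, ENNReal.ofReal (1 / Q) := by
        rw [Finset.sum_const, nsmul_eq_mul, ← ENNReal.ofReal_natCast,
          ← ENNReal.ofReal_mul (by positivity), mul_one_div]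
    _ ≤ ∑ q ∈ B, volume (Ico ((n : ℝ) / q) ((n + 1) / q)) := by
        gcongr with q hq
        obtain ⟨hq0, -, hqQ⟩ := hB q hq
        have hqr : (0 : ℝ) < q := by exact_mod_cast hq0
        rw [Real.volume_Ico, ← sub_div, add_sub_cancel_left]
        gcongr
    _ = volume (⋃ q ∈ B, Ico ((n : ℝ) / q) ((n + 1) / q)) :=
        (measure_biUnion_finset ((pairwiseDisjoint_Ico_div n).subset fun q hq => (hB q hq).2.1)
          fun _ _ => measurableSet_Ico).symm
    _ ≤ volume T := measure_mono (iUnion₂_subset hT)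

lemma exists_natFloor_mul_eq_of_volume_le {T : Set ℝ}
    (hT : volume T ≤ ENNReal.ofReal (1 / 20)) {p m : ℕ} (hp : 100 ≤ p) (hpm : p ≤ m)
    (hmp : m ≤ 2 * p) :
    ∃ q, p / 4 < q ∧ (∃ ν ∈ Icc (2 : ℝ) 10 \ T, ⌊ν * q⌋₊ = m) ∧
      ∃ ν ∈ Icc (2 : ℝ) 10 \ T, ⌊ν * q⌋₊ = p := by
  classical
  let bad (n : ℕ) : Finset ℕ :=
    (Finset.Icc (p / 4 + 1) (p / 2)).filter fun q => Ico ((n : ℝ) / q) ((n + 1) / q) ⊆ T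
  have hIcc : ∀ n q, p ≤ n → n ≤ 2 * p → q ∈ Finset.Icc (p / 4 + 1) (p / 2) →
      Ico ((n : ℝ) / q) ((n + 1) / q) ⊆ Icc 2 10 := by
    intro n q hpn hnp hq ν hν
    rw [Finset.mem_Icc] at hq
    have hqr : (0 : ℝ) < q := by exact_mod_cast (by omega : 0 < q)
    have h2 : ((2 * q : ℕ) : ℝ) ≤ n := by exact_mod_cast (by omega : 2 * q ≤ n)
    have h10 : ((n + 1 : ℕ) : ℝ) ≤ (10 * q : ℕ) := by
      exact_mod_cast (by omega : n + 1 ≤ 10 * q)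
    push_cast at h2 h10
    rw [mem_Ico, div_le_iff₀ hqr, lt_div_iff₀ hqr] at hν
    constructor <;> nlinarith [hν.1, hν.2]
  -- The bad `q` for one `n` fill at most `1/20` of `[2, 10]`: there are at most `p / 40`.
  have hbad : ∀ n, p ≤ n → n ≤ 2 * p → 20 * (bad n).card ≤ p / 2 := by
    intro n hpn hnp
    have hvol := (ofReal_card_div_le_volume (B := bad n) (n := n) (Q := p / 2) ?_ ?_).trans hT
    · rw [ENNReal.ofReal_le_ofReal_iff (by norm_num),
        div_le_div_iff₀ (by exact_mod_cast (by omega : 0 < p / 2)) (by norm_num)] at hvol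
      exact_mod_cast (by linarith : (20 * (bad n).card : ℝ) ≤ (p / 2 : ℕ))
    · intro q hq
      rw [Finset.mem_filter, Finset.mem_Icc] at hq
      omega
    · exact fun q hq => (Finset.mem_filter.1 hq).2
  have hcover : ¬ Finset.Icc (p / 4 + 1) (p / 2) ⊆ bad m ∪ bad p := by
    intro hsub
    have := (Finset.card_le_card hsub).trans (Finset.card_union_le _ _)
    rw [Nat.card_Icc] at this
    have := hbad m hpm hmp
    have := hbad p le_rfl (by omega)
    omega
  obtain ⟨q, hq, hqbad⟩ := Finset.not_subset.1 hcover
  have hgood : ∀ n, p ≤ n → n ≤ 2 * p → q ∉ bad n →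
      ∃ ν ∈ Icc (2 : ℝ) 10 \ T, ⌊ν * q⌋₊ = n := by
    intro n hpn hnp hqn
    obtain ⟨ν, hν, hνT⟩ := not_subset.1 fun h => hqn (Finset.mem_filter.2 ⟨hq, h⟩)
    have hq0 : 0 < q := by rw [Finset.mem_Icc] at hq; omega
    exact ⟨ν, ⟨hIcc n q hpn hnp hq hν, hνT⟩, natFloor_mul_eq_of_mem_Ico hq0 hν⟩
  rw [Finset.mem_union, not_or] at hqbad
  rw [Finset.mem_Icc] at hq
  exact ⟨q, by omega, hgood m hpm hmp hqbad.1, hgood p le_rfl (by omega) hqbad.2⟩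

theorem eventually_abs_sub_le_of_tendsto_natFloor_mul_sub {s : ℕ → ℝ}
    (hs : ∀ l : ℝ, 0 < l → Tendsto (fun q : ℕ => s ⌊l * q⌋₊ - s q) atTop (𝓝 0))
    {ε : ℝ} (hε : 0 < ε) :
    ∀ᶠ p in atTop, ∀ m, p ≤ m → m ≤ 2 * p → |s m - s p| ≤ ε := by
  have hmeas (q : ℕ) : StronglyMeasurable fun l : ℝ => s ⌊l * q⌋₊ - s q :=
    ((measurable_from_top.comp (Nat.measurable_floor.comp (measurable_mul_const _))).sub_const
      _).stronglyMeasurable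
  obtain ⟨T, -, -, hT, hunif⟩ := tendstoUniformlyOn_of_ae_tendsto (μ := volume) hmeas
    stronglyMeasurable_const (measurableSet_Icc (a := (2 : ℝ)) (b := 10))
    (by simp [Real.volume_Icc]) (ae_of_all _ fun l hl => hs l (by linarith [hl.1]))
    (by norm_num : (0 : ℝ) < 1 / 20)
  obtain ⟨N, hN⟩ :=
    eventually_atTop.1 (Metric.tendstoUniformlyOn_iff.1 hunif (ε / 2) (half_pos hε))
  filter_upwards [eventually_ge_atTop (4 * N + 100)] with p hp m hpm hmp
  obtain ⟨q, hq, ⟨ν, hν, hνm⟩, ⟨ν', hν', hν'p⟩⟩ :=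
    exists_natFloor_mul_eq_of_volume_le hT (by omega) hpm hmp
  have hm := hN q (by omega) ν hν
  have hp := hN q (by omega) ν' hν'
  rw [hνm, dist_zero_left, Real.norm_eq_abs] at hm
  rw [hν'p, dist_zero_left, Real.norm_eq_abs] at hp
  linarith [abs_sub_le (s m) (s q) (s p), abs_sub_comm (s q) (s p)]

/-- `log ℓ p`, where `c p = p ^ ω * ℓ p`. -/
noncomputable def logSlowPart (c : ℕ → ℝ) (ω : ℝ) (n : ℕ) : ℝ :=
  Real.log (c n) - ω * Real.log n

lemma tendsto_logSlowPart_natFloor_mul_sub {c : ℕ → ℝ} (hc : ∀ p : ℕ, 1 ≤ p → 0 < c p)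
    {ω : ℝ} (hrv : ∀ l : ℝ, 0 < l →
      Tendsto (fun p : ℕ => c ⌊l * p⌋₊ / c p) atTop (𝓝 (l ^ ω)))
    {l : ℝ} (hl : 0 < l) :
    Tendsto (fun q : ℕ => logSlowPart c ω ⌊l * q⌋₊ - logSlowPart c ω q)
      atTop (𝓝 0) := by
  have hratio :
      Tendsto (fun q : ℕ => Real.log (c ⌊l * q⌋₊ / c q)) atTop
        (𝓝 (ω * Real.log l)) := by
    rw [← Real.log_rpow hl]
    exact (hrv l hl).log (Real.rpow_pos_of_pos hl ω).ne'
  have hfloor : Tendsto (fun q : ℕ => Real.log (⌊l * q⌋₊ / q)) atTop (𝓝 (Real.log l)) :=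
    ((tendsto_nat_floor_mul_div_atTop hl.le).comp tendsto_natCast_atTop_atTop).log hl.ne'
  have hfloor_pos : ∀ᶠ q : ℕ in atTop, 1 ≤ ⌊l * q⌋₊ :=
    (tendsto_nat_floor_atTop.comp
      (tendsto_natCast_atTop_atTop.const_mul_atTop hl)).eventually_ge_atTop 1
  have := hratio.sub (hfloor.const_mul ω)
  rw [sub_self] at this
  refine this.congr' ?_
  filter_upwards [hfloor_pos, eventually_ge_atTop 1] with q hlq hq
  have hlq' : (0 : ℝ) < ⌊l * q⌋₊ := by exact_mod_cast hlq
  have hq' : (0 : ℝ) < q := by exact_mod_cast hq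
  simp only [logSlowPart]
  rw [Real.log_div (hc _ hlq).ne' (hc q hq).ne', Real.log_div hlq'.ne' hq'.ne']
  ring

lemma tendsto_sub_of_forall_eventually_abs_sub_le {s : ℕ → ℝ}
    (hs : ∀ ε > 0, ∀ᶠ p in atTop, ∀ m, p ≤ m → m ≤ 2 * p → |s m - s p| ≤ ε)
    {f g : ℕ → ℕ} (hf : Tendsto f atTop atTop)
    (hfg : ∀ᶠ n in atTop, f n ≤ g n ∧ g n ≤ 2 * f n) :
    Tendsto (fun n => s (g n) - s (f n)) atTop (𝓝 0) := by
  refine Metric.tendsto_nhds.2 fun ε hε => ?_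
  filter_upwards [hf.eventually (hs (ε / 2) (half_pos hε)), hfg] with n hn hn'
  rw [Real.dist_eq, sub_zero]
  exact (hn (g n) hn'.1 hn'.2).trans_lt (half_lt_self hε)

lemma pow_log_le_self_le_two_mul {p : ℕ} (hp : p ≠ 0) :
    2 ^ Nat.log 2 p ≤ p ∧ p ≤ 2 * 2 ^ Nat.log 2 p := by
  have := Nat.lt_pow_succ_log_self (b := 2) (by norm_num) p
  rw [pow_succ] at this
  exact ⟨Nat.pow_log_le_self 2 hp, by omega⟩

lemma tendsto_pow_log_atTop : Tendsto (fun p => 2 ^ Nat.log 2 p) atTop atTop :=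
  tendsto_atTop_atTop.2 fun N => ⟨2 * N + 1, fun p hp => by
    have := (pow_log_le_self_le_two_mul (p := p) (by omega)).2
    omega⟩

noncomputable def dyadicInterpolation (s : ℕ → ℝ) (p : ℕ) : ℝ :=
  s (2 ^ Nat.log 2 p) +
    (s (2 ^ (Nat.log 2 p + 1)) - s (2 ^ Nat.log 2 p)) * (Real.logb 2 p - Nat.log 2 p)

lemma logb_sub_natLog_mem_Icc (p : ℕ) : Real.logb 2 p - Nat.log 2 p ∈ Icc (0 : ℝ) 1 := by
  have h := Nat.lt_floor_add_one (Real.logb 2 p)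
  rw [show (2 : ℝ) = (2 : ℕ) by norm_num, Real.natFloor_logb_natCast] at h
  push_cast at h
  exact ⟨sub_nonneg.2 (by exact_mod_cast Real.natLog_le_logb p 2), by linarith⟩

lemma dyadicInterpolation_succ_sub (s : ℕ → ℝ) {p : ℕ} (hp : p ≠ 0) :
    dyadicInterpolation s (p + 1) - dyadicInterpolation s p =
      (s (2 ^ (Nat.log 2 p + 1)) - s (2 ^ Nat.log 2 p)) *
        (Real.logb 2 (p + 1) - Real.logb 2 p) := by
  have hlt := Nat.lt_pow_succ_log_self (b := 2) (by norm_num) p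
  rcases (Nat.succ_le_of_lt hlt).lt_or_eq with h | h
  · have hlog : Nat.log 2 (p + 1) = Nat.log 2 p :=
      Nat.log_eq_of_pow_le_of_lt_pow ((Nat.pow_log_le_self 2 hp).trans p.le_succ) h
    simp only [dyadicInterpolation, hlog]
    push_cast
    ring
  · rw [Nat.succ_eq_add_one] at h
    have hlog : Nat.log 2 (p + 1) = Nat.log 2 p + 1 := by
      rw [h, Nat.log_pow (by norm_num)]
    have hlogb : Real.logb 2 ((p + 1 : ℕ) : ℝ) = Nat.log 2 p + 1 := by
      rw [h]
      push_cast
      rw [Real.logb_pow, Real.logb_self_eq_one (by norm_num), mul_one, Nat.cast_succ]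
    simp only [dyadicInterpolation, hlog, hlogb]
    push_cast at hlogb ⊢
    rw [hlogb]
    ring

lemma logb_succ_sub_logb_mul_le (p : ℕ) : (Real.logb 2 (p + 1) - Real.logb 2 p) * p ≤ 2 := by
  rcases Nat.eq_zero_or_pos p with rfl | hp
  · simp
  have hpr : (0 : ℝ) < p := by exact_mod_cast hp
  have hlog : Real.log (p + 1) - Real.log p ≤ 1 / p := by
    rw [← Real.log_div (by positivity) hpr.ne']
    calc Real.log ((p + 1) / p) ≤ (p + 1) / p - 1 := Real.log_le_sub_one_of_pos (by positivity)
      _ = 1 / p := by field_simp; ring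
  have hlog2 : 1 / 2 < Real.log 2 := by linarith [Real.log_two_gt_d9]
  rw [Real.logb, Real.logb, ← sub_div, div_mul_eq_mul_div, div_le_iff₀ (by linarith)]
  calc (Real.log (p + 1) - Real.log p) * p ≤ 1 / p * p := by gcongr
    _ ≤ 2 * Real.log 2 := by rw [one_div_mul_cancel hpr.ne']; linarith

lemma logb_le_logb_succ (p : ℕ) : Real.logb 2 p ≤ Real.logb 2 (p + 1) := by
  rcases Nat.eq_zero_or_pos p with rfl | hp
  · simp
  exact Real.logb_le_logb_of_le (by norm_num) (by exact_mod_cast hp) (by linarith)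

lemma abs_dyadicInterpolation_sub_le (s : ℕ → ℝ) (p : ℕ) :
    |dyadicInterpolation s p - s p| ≤
      |s p - s (2 ^ Nat.log 2 p)| + |s (2 ^ (Nat.log 2 p + 1)) - s (2 ^ Nat.log 2 p)| := by
  obtain ⟨h0, h1⟩ := logb_sub_natLog_mem_Icc p
  calc |dyadicInterpolation s p - s p|
      = |-(s p - s (2 ^ Nat.log 2 p)) +
          (s (2 ^ (Nat.log 2 p + 1)) - s (2 ^ Nat.log 2 p)) * (Real.logb 2 p - Nat.log 2 p)| := by
        rw [dyadicInterpolation]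
        congr 1
        ring
    _ ≤ _ := by
        grw [abs_add_le, abs_neg, abs_mul, abs_of_nonneg h0,
          mul_le_of_le_one_right (abs_nonneg _) h1]

lemma abs_dyadicInterpolation_succ_sub_mul_le (s : ℕ → ℝ) {p : ℕ} (hp : p ≠ 0) :
    |(dyadicInterpolation s (p + 1) - dyadicInterpolation s p) * p| ≤
      2 * |s (2 ^ (Nat.log 2 p + 1)) - s (2 ^ Nat.log 2 p)| := by
  rw [dyadicInterpolation_succ_sub s hp, mul_assoc, abs_mul,
    abs_of_nonneg (mul_nonneg (sub_nonneg.2 (logb_le_logb_succ p)) p.cast_nonneg), mul_comm]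
  exact mul_le_mul_of_nonneg_right (logb_succ_sub_logb_mul_le p) (abs_nonneg _)

lemma tendsto_dyadicInterpolation_sub {s : ℕ → ℝ}
    (hs : ∀ ε > 0, ∀ᶠ p in atTop, ∀ m, p ≤ m → m ≤ 2 * p → |s m - s p| ≤ ε) :
    Tendsto (fun p => dyadicInterpolation s p - s p) atTop (𝓝 0) ∧
      Tendsto (fun p : ℕ => (dyadicInterpolation s (p + 1) - dyadicInterpolation s p) * p)
        atTop (𝓝 0) := by
  have hinside := tendsto_sub_of_forall_eventually_abs_sub_le hs tendsto_pow_log_atTop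
    (eventually_ne_atTop 0 |>.mono fun p hp => pow_log_le_self_le_two_mul hp)
  have hjump := tendsto_sub_of_forall_eventually_abs_sub_le hs tendsto_pow_log_atTop
    (g := fun p => 2 ^ (Nat.log 2 p + 1)) <| .of_forall fun p =>
      ⟨Nat.pow_le_pow_right two_pos (Nat.le_succ _), (pow_succ' 2 _).le⟩
  constructor
  · exact squeeze_zero_norm (abs_dyadicInterpolation_sub_le s)
      (by simpa using hinside.abs.add hjump.abs)
  · refine squeeze_zero_norm' ?_ (by simpa using hjump.abs.const_mul 2)
    filter_upwards [eventually_ne_atTop 0] with p hp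
    exact abs_dyadicInterpolation_succ_sub_mul_le s hp

lemma tendsto_log_succ_sub_log_mul :
    Tendsto (fun p : ℕ => (Real.log (p + 1) - Real.log p) * p) atTop (𝓝 1) := by
  have h := (Real.tendsto_mul_log_one_add_div_atTop 1).comp tendsto_natCast_atTop_atTop
  refine h.congr' ?_
  filter_upwards [eventually_ne_atTop 0] with p hp
  have hpr : (0 : ℝ) < p := by positivity
  rw [Function.comp_apply, one_add_div hpr.ne', Real.log_div (by positivity) hpr.ne']
  ring

lemma tendsto_exp_sub_one_sub_div_mul {x : ℕ → ℝ} {ω : ℝ}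
    (hx : Tendsto (fun p : ℕ => x p * p) atTop (𝓝 ω)) :
    Tendsto (fun p : ℕ => (Real.exp (x p) - 1 - ω / p) * p) atTop (𝓝 0) := by
  have hx0 : Tendsto x atTop (𝓝 0) := by
    have := hx.mul tendsto_inv_atTop_nhds_zero_nat
    rw [mul_zero] at this
    refine this.congr' ?_
    filter_upwards [eventually_ne_atTop 0] with p hp
    field_simp
  have hquad : Tendsto (fun p : ℕ => (Real.exp (x p) - 1 - x p) * p) atTop (𝓝 0) := by
    refine squeeze_zero_norm' ?_ (by simpa using hx.abs.mul hx0.abs)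
    filter_upwards [hx0.eventually (Metric.closedBall_mem_nhds 0 one_pos)] with p hp
    rw [dist_zero_right, Real.norm_eq_abs] at hp
    calc ‖(Real.exp (x p) - 1 - x p) * p‖ = |Real.exp (x p) - 1 - x p| * p := by
          rw [norm_mul, Real.norm_eq_abs, Real.norm_natCast]
      _ ≤ x p ^ 2 * p := by grw [Real.abs_exp_sub_one_sub_id_le hp]
      _ = |x p| * p * |x p| := by rw [← sq_abs]; ring
  have := (hx.sub_const ω).add hquad
  rw [sub_self, add_zero] at this
  refine this.congr' ?_
  filter_upwards [eventually_ne_atTop 0] with p hp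
  field_simp
  ring

/-- Bojanic–Seneta: if `(c p)` is a sequence of positive reals which is regularly varying
of index `ω`, then there is a positive sequence `(b p)` with `b p / c p → 1` and
`b (p+1) / b p = 1 + ω/p + o(1/p)` as `p → ∞`. -/
theorem stmt15 (c : ℕ → ℝ) (hc : ∀ p : ℕ, 1 ≤ p → 0 < c p) (ω : ℝ)
    (hrv : ∀ l : ℝ, 0 < l →
      Tendsto (fun p : ℕ => c ⌊l * p⌋₊ / c p) atTop (nhds (l ^ ω))) :
    ∃ b : ℕ → ℝ, (∀ p : ℕ, 1 ≤ p → 0 < b p) ∧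
      Tendsto (fun p : ℕ => b p / c p) atTop (nhds 1) ∧
      Tendsto (fun p : ℕ => (b (p + 1) / b p - 1 - ω / p) * p) atTop (nhds 0) := by
  obtain ⟨hus, hstep⟩ := tendsto_dyadicInterpolation_sub fun ε hε =>
    eventually_abs_sub_le_of_tendsto_natFloor_mul_sub
      (fun l hl => tendsto_logSlowPart_natFloor_mul_sub hc hrv hl) hε
  set u := dyadicInterpolation (logSlowPart c ω)
  refine ⟨fun p => Real.exp (ω * Real.log p + u p), fun p _ => Real.exp_pos _, ?_, ?_⟩
  · have := hus.rexp
    rw [Real.exp_zero] at this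
    refine this.congr' ?_
    filter_upwards [eventually_ge_atTop 1] with p hp
    rw [← Real.exp_log (hc p hp), ← Real.exp_sub, logSlowPart]
    congr 1
    ring
  · have hx := (tendsto_log_succ_sub_log_mul.const_mul ω).add hstep
    rw [mul_one, add_zero] at hx
    refine (tendsto_exp_sub_one_sub_div_mul
      (x := fun p => ω * (Real.log (p + 1) - Real.log p) + (u (p + 1) - u p))
      (hx.congr fun p => by ring)).congr fun p => ?_
    rw [← Real.exp_sub]
    push_cast
    ring_nf
end

section
/- Let L and M be weight sequences such that L satisfies lim_{p→∞} log(ℓ_p)/log(p) = ω(L), and assume ω(L) < ω(M). Then m_p/ℓ_p → ∞ as p → ∞. -/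
open Filter

/-- Let `L`, `M` be weight sequences such that `log (ℓ p)/log p → ω(L)` and suppose
`ω(L) < ω(M) = liminf log(m p)/log p`. Then `m p / ℓ p → ∞`. -/
theorem stmt17 (M L : ℕ → ℝ)
    (hMpos : ∀ p, 0 < M p) (hM0 : M 0 = 1)
    (hMmono : Monotone fun p => M (p + 1) / M p)
    (hMquot : Tendsto (fun p => M (p + 1) / M p) atTop atTop)
    (hLpos : ∀ p, 0 < L p) (hL0 : L 0 = 1)
    (hLmono : Monotone fun p => L (p + 1) / L p)
    (hLquot : Tendsto (fun p => L (p + 1) / L p) atTop atTop)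
    (ωL : ℝ)
    (hL : Tendsto (fun p : ℕ => Real.log (L (p + 1) / L p) / Real.log p)
      atTop (nhds ωL))
    (hlt : (ωL : EReal) <
      liminf (fun p : ℕ =>
        ((Real.log (M (p + 1) / M p) / Real.log p : ℝ) : EReal)) atTop) :
    Tendsto (fun p : ℕ => (M (p + 1) / M p) / (L (p + 1) / L p)) atTop atTop := by
  obtain ⟨c, hc1, hc2⟩ := EReal.exists_between_coe_real hlt
  have hωc : ωL < c := by exact_mod_cast hc1
  set d : ℝ := (ωL + c) / 2 with hd
  have hdc : d < c := by simp only [hd]; linarith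
  have hωd : ωL < d := by simp only [hd]; linarith
  -- eventually c < log m_p / log p
  have h1 : ∀ᶠ p : ℕ in atTop,
      c < Real.log (M (p + 1) / M p) / Real.log p := by
    have := eventually_lt_of_lt_liminf hc2
    filter_upwards [this] with p hp
    exact_mod_cast hp
  -- eventually log ℓ_p / log p < d
  have h2 : ∀ᶠ p : ℕ in atTop,
      Real.log (L (p + 1) / L p) / Real.log p < d :=
    hL.eventually_lt_const hωd
  have hlogp : Tendsto (fun p : ℕ => Real.log p) atTop atTop :=
    Real.tendsto_log_atTop.comp tendsto_natCast_atTop_atTop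
  -- log(m_p/ℓ_p) → ∞
  have hloglim : Tendsto (fun p : ℕ =>
      Real.log ((M (p + 1) / M p) / (L (p + 1) / L p))) atTop atTop := by
    have hbound : Tendsto (fun p : ℕ => (c - d) * Real.log p) atTop atTop :=
      hlogp.const_mul_atTop (by linarith)
    refine tendsto_atTop_mono' atTop ?_ hbound
    filter_upwards [h1, h2, hlogp.eventually_gt_atTop 0] with p hp1 hp2 hp3
    have hm : 0 < M (p + 1) / M p := div_pos (hMpos _) (hMpos _)
    have hl : 0 < L (p + 1) / L p := div_pos (hLpos _) (hLpos _)
    rw [Real.log_div (ne_of_gt hm) (ne_of_gt hl)]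
    have e1 : c * Real.log p < Real.log (M (p + 1) / M p) :=
      (lt_div_iff₀ hp3).mp hp1
    have e2 : Real.log (L (p + 1) / L p) < d * Real.log p :=
      (div_lt_iff₀ hp3).mp hp2
    nlinarith
  have := Real.tendsto_exp_atTop.comp hloglim
  refine this.congr' ?_
  filter_upwards with p
  have hm : 0 < M (p + 1) / M p := div_pos (hMpos _) (hMpos _)
  have hl : 0 < L (p + 1) / L p := div_pos (hLpos _) (hLpos _)
  exact Real.exp_log (div_pos hm hl)
end
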